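/- arXiv:2507.01655 — 2 statements merged into one kernel-verified Lean document; each statement's English description precedes it below -/
import Mathlib

section
/- On the Lie algebra n_t (for every real t ≠ 0), the curvature R of the torsion connection ∇ associated with T = −2t(e₁₂₆ − e₃₄₆) is an SU(3)-instanton: for all X,Y,Z,V, (1) R(X,Y,Z,V) = R(Z,V,X,Y); (2) R(JX,JY,Z,V) = R(X,Y,Z,V); (3) Σᵢ R(eᵢ, Jeᵢ, Z, V) = 0 (sum over i = 1,…,6). -/
/-!
With ω = e₁₂ − e₃₄ one has [X,Y] = 2t ω(X,Y) e₆, and the torsion connection of 𝔫_t is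
∇_X = 2t x₆ A, where A is the skew endomorphism with g(AZ, V) = −ω(Z, V). All ∇_X are multiples
of the same A, so they commute and R(X,Y) = −∇_{[X,Y]} = −4t² ω(X,Y) A, i.e.
R = 4t² ω ⊗ ω. The three instanton conditions then only say that ω is J-invariant and
orthogonal to the Kähler form.
-/

open scoped BigOperators

noncomputable section

/-- The standard inner product on ℝ⁶. -/
def gIP (X Y : Fin 6 → ℝ) : ℝ := ∑ i, X i * Y i

/-- The standard orthonormal basis e₁,…,e₆ (0-indexed). -/
def e (i : Fin 6) : Fin 6 → ℝ := fun j => if j = i then 1 else 0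

/-- The 2-form e_{ij} (0-indexed). -/
def two (i j : Fin 6) (X Y : Fin 6 → ℝ) : ℝ := X i * Y j - X j * Y i

/-- The 3-form e_{ijk} (0-indexed). -/
def three (i j k : Fin 6) (X Y Z : Fin 6 → ℝ) : ℝ :=
  X i * (Y j * Z k - Y k * Z j) - X j * (Y i * Z k - Y k * Z i) + X k * (Y i * Z j - Y j * Z i)

/-- The 4-form e_{ijkl} (0-indexed). -/
def four (i j k l : Fin 6) (X Y Z W : Fin 6 → ℝ) : ℝ :=
  X i * three j k l Y Z W - X j * three i k l Y Z W
    + X k * three i j l Y Z W - X l * three i j k Y Z W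

/-- F = −e₁₂ − e₃₄ − e₅₆. -/
def Fform (X Y : Fin 6 → ℝ) : ℝ := -two 0 1 X Y - two 2 3 X Y - two 4 5 X Y

/-- Ψ⁺ = −e₁₃₅ + e₂₃₆ + e₁₄₆ + e₂₄₅. -/
def Psip (X Y Z : Fin 6 → ℝ) : ℝ :=
  -three 0 2 4 X Y Z + three 1 2 5 X Y Z + three 0 3 5 X Y Z + three 1 3 4 X Y Z

/-- Ψ⁻ = −e₁₃₆ − e₁₄₅ − e₂₃₅ + e₂₄₆. -/
def Psim (X Y Z : Fin 6 → ℝ) : ℝ :=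
  -three 0 2 5 X Y Z - three 0 3 4 X Y Z - three 1 2 4 X Y Z + three 1 3 5 X Y Z

/-- Φ(X,Y,Z,V) = F(X,Y)F(Z,V) + F(Y,Z)F(X,V) + F(Z,X)F(Y,V). -/
def Phi (X Y Z V : Fin 6 → ℝ) : ℝ :=
  Fform X Y * Fform Z V + Fform Y Z * Fform X V + Fform Z X * Fform Y V

/-- The orthogonal complex structure: Je₁=e₂, Je₂=−e₁, Je₃=e₄, Je₄=−e₃, Je₅=e₆, Je₆=−e₅. -/
def Jc (X : Fin 6 → ℝ) : Fin 6 → ℝ := ![-X 1, X 0, -X 3, X 2, -X 5, X 4]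

/-- Θ⁺ = e₁₃₅ − e₁₄₆ − e₂₃₆ − e₂₄₅. -/
def Thp (X Y Z : Fin 6 → ℝ) : ℝ :=
  three 0 2 4 X Y Z - three 0 3 5 X Y Z - three 1 2 5 X Y Z - three 1 3 4 X Y Z

/-- Θ⁻ = e₁₃₆ + e₁₄₅ + e₂₃₅ − e₂₄₆. -/
def Thm (X Y Z : Fin 6 → ℝ) : ℝ :=
  three 0 2 5 X Y Z + three 0 3 4 X Y Z + three 1 2 4 X Y Z - three 1 3 5 X Y Z

/-- Nijenhuis tensor N(X,Y) = [JX,JY] − [X,Y] − J[JX,Y] − J[X,JY] for a bracket `br`. -/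
def Nij (br : (Fin 6 → ℝ) → (Fin 6 → ℝ) → (Fin 6 → ℝ)) (X Y : Fin 6 → ℝ) : Fin 6 → ℝ :=
  br (Jc X) (Jc Y) - br X Y - Jc (br (Jc X) Y) - Jc (br X (Jc Y))

/-- Chevalley–Eilenberg differential of a 2-form. -/
def d2 (br : (Fin 6 → ℝ) → (Fin 6 → ℝ) → (Fin 6 → ℝ))
    (α : (Fin 6 → ℝ) → (Fin 6 → ℝ) → ℝ) (X Y Z : Fin 6 → ℝ) : ℝ :=
  -α (br X Y) Z + α (br X Z) Y - α (br Y Z) X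

/-- Chevalley–Eilenberg differential of a 3-form. -/
def d3 (br : (Fin 6 → ℝ) → (Fin 6 → ℝ) → (Fin 6 → ℝ))
    (α : (Fin 6 → ℝ) → (Fin 6 → ℝ) → (Fin 6 → ℝ) → ℝ) (X Y Z W : Fin 6 → ℝ) : ℝ :=
  -α (br X Y) Z W + α (br X Z) Y W - α (br X W) Y Z
    - α (br Y Z) X W + α (br Y W) X Z - α (br Z W) X Y

/-- The torsion connection ∇ associated with a bracket `br` and a 3-form `T`:
g(∇_X Y, Z) = ½( g([X,Y],Z) − g([Y,Z],X) + g([Z,X],Y) + T(X,Y,Z) ). -/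
def nab (br : (Fin 6 → ℝ) → (Fin 6 → ℝ) → (Fin 6 → ℝ))
    (T : (Fin 6 → ℝ) → (Fin 6 → ℝ) → (Fin 6 → ℝ) → ℝ)
    (X Y : Fin 6 → ℝ) : Fin 6 → ℝ :=
  fun m => (1/2) * (gIP (br X Y) (e m) - gIP (br Y (e m)) X + gIP (br (e m) X) Y + T X Y (e m))

/-- The covariant derivative of a 3-form α:
(∇_X α)(Y,Z,V) = −α(∇_X Y,Z,V) − α(Y,∇_X Z,V) − α(Y,Z,∇_X V). -/
def nabForm3 (br : (Fin 6 → ℝ) → (Fin 6 → ℝ) → (Fin 6 → ℝ))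
    (T α : (Fin 6 → ℝ) → (Fin 6 → ℝ) → (Fin 6 → ℝ) → ℝ)
    (X Y Z V : Fin 6 → ℝ) : ℝ :=
  -α (nab br T X Y) Z V - α Y (nab br T X Z) V - α Y Z (nab br T X V)

/-- Curvature R(X,Y)Z = ∇_X∇_Y Z − ∇_Y∇_X Z − ∇_{[X,Y]}Z. -/
def Rmap (br : (Fin 6 → ℝ) → (Fin 6 → ℝ) → (Fin 6 → ℝ))
    (T : (Fin 6 → ℝ) → (Fin 6 → ℝ) → (Fin 6 → ℝ) → ℝ)
    (X Y Z : Fin 6 → ℝ) : Fin 6 → ℝ :=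
  nab br T X (nab br T Y Z) - nab br T Y (nab br T X Z) - nab br T (br X Y) Z

/-- R(X,Y,Z,V) = g(R(X,Y)Z,V). -/
def R4 (br : (Fin 6 → ℝ) → (Fin 6 → ℝ) → (Fin 6 → ℝ))
    (T : (Fin 6 → ℝ) → (Fin 6 → ℝ) → (Fin 6 → ℝ) → ℝ)
    (X Y Z V : Fin 6 → ℝ) : ℝ :=
  gIP (Rmap br T X Y Z) V

/-- The Lie bracket of 𝔫_t: [e₁,e₂] = 2t·e₆, [e₃,e₄] = −2t·e₆ (bilinear extension). -/
def brN (t : ℝ) (X Y : Fin 6 → ℝ) : Fin 6 → ℝ :=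
  (2 * t * two 0 1 X Y - 2 * t * two 2 3 X Y) • e 5

/-- The torsion 3-form T = −2t(e₁₂₆ − e₃₄₆) on 𝔫_t. -/
def TN (t : ℝ) (X Y Z : Fin 6 → ℝ) : ℝ :=
  -2 * t * (three 0 1 5 X Y Z - three 2 3 5 X Y Z)

def omegaN (X Y : Fin 6 → ℝ) : ℝ := two 0 1 X Y - two 2 3 X Y

def omegaEnd : (Fin 6 → ℝ) →ₗ[ℝ] (Fin 6 → ℝ) where
  toFun Y := ![Y 1, -Y 0, -Y 3, Y 2, 0, 0]
  map_add' Y Y' := by ext i; fin_cases i <;> simp [add_comm]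
  map_smul' c Y := by ext i; fin_cases i <;> simp

lemma gIP_omegaEnd (Z V : Fin 6 → ℝ) : gIP (omegaEnd Z) V = -omegaN Z V := by
  simp only [gIP, omegaEnd, omegaN, two, LinearMap.coe_mk, AddHom.coe_mk, Fin.sum_univ_six,
    Matrix.cons_val]
  ring

lemma gIP_smul_left (c : ℝ) (X Y : Fin 6 → ℝ) : gIP (c • X) Y = c * gIP X Y :=
  smul_dotProduct c X Y

lemma brN_apply_five (t : ℝ) (X Y : Fin 6 → ℝ) : brN t X Y 5 = 2 * t * omegaN X Y := by
  simp only [brN, omegaN, e, Pi.smul_apply, if_true, smul_eq_mul, mul_one]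
  ring

lemma nab_brN_TN (t : ℝ) (X Y : Fin 6 → ℝ) :
    nab (brN t) (TN t) X Y = (2 * t * X 5) • omegaEnd Y := by
  ext m
  fin_cases m <;> simp [nab, gIP, brN, TN, two, three, e, omegaEnd] <;> ring

lemma Rmap_eq_of_nab_eq_smul {br : (Fin 6 → ℝ) → (Fin 6 → ℝ) → (Fin 6 → ℝ)}
    {T : (Fin 6 → ℝ) → (Fin 6 → ℝ) → (Fin 6 → ℝ) → ℝ} (φ : (Fin 6 → ℝ) → ℝ)
    (A : (Fin 6 → ℝ) →ₗ[ℝ] (Fin 6 → ℝ)) (hnab : ∀ X Y, nab br T X Y = φ X • A Y)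
    (X Y Z : Fin 6 → ℝ) : Rmap br T X Y Z = -(φ (br X Y) • A Z) := by
  simp only [Rmap, hnab, map_smul, smul_smul, mul_comm (φ X), sub_self, zero_sub]

lemma R4_brN_TN (t : ℝ) (X Y Z V : Fin 6 → ℝ) :
    R4 (brN t) (TN t) X Y Z V = 4 * t ^ 2 * omegaN X Y * omegaN Z V := by
  rw [R4, Rmap_eq_of_nab_eq_smul _ omegaEnd (nab_brN_TN t), ← neg_smul, gIP_smul_left,
    gIP_omegaEnd, brN_apply_five]
  ring

lemma omegaN_Jc (X Y : Fin 6 → ℝ) : omegaN (Jc X) (Jc Y) = omegaN X Y := by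
  simp only [omegaN, two, Jc, Matrix.cons_val]
  ring

lemma sum_omegaN_e_Jc_e : ∑ i, omegaN (e i) (Jc (e i)) = 0 := by
  simp [omegaN, Jc, two, e, Fin.sum_univ_six]

theorem stmt6_general (t : ℝ) :
    (∀ X Y Z V : Fin 6 → ℝ, R4 (brN t) (TN t) X Y Z V = R4 (brN t) (TN t) Z V X Y) ∧
    (∀ X Y Z V : Fin 6 → ℝ, R4 (brN t) (TN t) (Jc X) (Jc Y) Z V = R4 (brN t) (TN t) X Y Z V) ∧
    (∀ Z V : Fin 6 → ℝ, ∑ i, R4 (brN t) (TN t) (e i) (Jc (e i)) Z V = 0) := by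
  refine ⟨fun X Y Z V => ?_, fun X Y Z V => ?_, fun Z V => ?_⟩
  · simp only [R4_brN_TN]
    ring
  · simp only [R4_brN_TN, omegaN_Jc]
  · simp only [R4_brN_TN, ← Finset.sum_mul, ← Finset.mul_sum, sum_omegaN_e_Jc_e, mul_zero,
      zero_mul]

/-- on 𝔫_t (t ≠ 0), the curvature of the torsion connection is an SU(3)-instanton. -/
theorem stmt6 (t : ℝ) (ht : t ≠ 0) :
    (∀ X Y Z V : Fin 6 → ℝ, R4 (brN t) (TN t) X Y Z V = R4 (brN t) (TN t) Z V X Y) ∧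
    (∀ X Y Z V : Fin 6 → ℝ, R4 (brN t) (TN t) (Jc X) (Jc Y) Z V = R4 (brN t) (TN t) X Y Z V) ∧
    (∀ Z V : Fin 6 → ℝ, ∑ i, R4 (brN t) (TN t) (e i) (Jc (e i)) Z V = 0) :=
  stmt6_general t
end
end

section
/- On the Lie algebra g_t (for every real t ≠ 0), let ∇ be the torsion connection associated with the 3-form T = −(1/t)(3e₁₃₅ + e₁₄₆ + e₂₃₆ + e₂₄₅). Then: (1) ∇_X(JY) = J(∇_X Y) for all X,Y; (2) ∇Θ⁺ = 0 and ∇Θ⁻ = 0; (3) the torsion of ∇ satisfies g(∇_X Y − ∇_Y X − [X,Y], Z) = T(X,Y,Z) for all X,Y,Z; (4) the Lee form vanishes: θ(X) = −½ Σᵢ T(JX, eᵢ, Jeᵢ) = 0 for all X (balanced). -/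
/-!
The torsion connection of `T` is computed in closed form: `∇_X` only depends on the
`e₁, e₃, e₅`-components of `X`, and each of these acts by a complex-linear rotation lying in
`su(3)`. Such endomorphisms commute with `J` and annihilate `Θ⁺` and `Θ⁻`. That the torsion is
`T` holds for any `T` skew in its first two arguments, and the Lee form vanishes by direct
contraction of `T` with the Kähler form.
-/

open scoped BigOperators

noncomputable section

/-- The Lie bracket of g_t (so(3,1) underlying sl(2,ℂ)), bilinear extension of
[e₃,e₅]=−(1/t)e₁, [e₄,e₆]=(1/t)e₁, [e₃,e₆]=−(1/t)e₂, [e₄,e₅]=−(1/t)e₂,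
[e₁,e₅]=(1/t)e₃, [e₂,e₆]=−(1/t)e₃, [e₁,e₆]=(1/t)e₄, [e₂,e₅]=(1/t)e₄,
[e₁,e₃]=−(1/t)e₅, [e₂,e₄]=(1/t)e₅, [e₁,e₄]=−(1/t)e₆, [e₂,e₃]=−(1/t)e₆. -/
def brG (t : ℝ) (X Y : Fin 6 → ℝ) : Fin 6 → ℝ :=
  (-(1 / t) * two 2 4 X Y + (1 / t) * two 3 5 X Y) • e 0
    + (-(1 / t) * two 2 5 X Y + -(1 / t) * two 3 4 X Y) • e 1
    + ((1 / t) * two 0 4 X Y + -(1 / t) * two 1 5 X Y) • e 2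
    + ((1 / t) * two 0 5 X Y + (1 / t) * two 1 4 X Y) • e 3
    + (-(1 / t) * two 0 2 X Y + (1 / t) * two 1 3 X Y) • e 4
    + (-(1 / t) * two 0 3 X Y + -(1 / t) * two 1 2 X Y) • e 5

/-- The torsion 3-form T = −(1/t)(3e₁₃₅ + e₁₄₆ + e₂₃₆ + e₂₄₅) on g_t. -/
def TG (t : ℝ) (X Y Z : Fin 6 → ℝ) : ℝ :=
  -(1 / t) * (3 * three 0 2 4 X Y Z + three 0 3 5 X Y Z
    + three 1 2 5 X Y Z + three 1 3 4 X Y Z)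

lemma gIP_e_right (V : Fin 6 → ℝ) (m : Fin 6) : gIP V (e m) = V m := by
  simp [gIP, e]

lemma gIP_neg_left (V W : Fin 6 → ℝ) : gIP (-V) W = -gIP V W := by
  simp [gIP]

lemma nab_torsion_apply (br : (Fin 6 → ℝ) → (Fin 6 → ℝ) → (Fin 6 → ℝ))
    (T : (Fin 6 → ℝ) → (Fin 6 → ℝ) → (Fin 6 → ℝ) → ℝ)
    (hbr : ∀ X Y, br X Y = -br Y X) (hT : ∀ X Y Z, T X Y Z = -T Y X Z)
    (X Y : Fin 6 → ℝ) (m : Fin 6) :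
    (nab br T X Y - nab br T Y X - br X Y) m = T X Y (e m) := by
  simp only [nab, Pi.sub_apply]
  rw [hbr Y X, hbr (e m) Y, hbr X (e m), hT Y X, gIP_neg_left, gIP_neg_left, gIP_neg_left,
    gIP_e_right]
  ring

lemma two_swap (i j : Fin 6) (X Y : Fin 6 → ℝ) : two i j X Y = -two i j Y X := by
  simp only [two]; ring

lemma brG_swap (t : ℝ) (X Y : Fin 6 → ℝ) : brG t X Y = -brG t Y X := by
  simp only [brG, two_swap _ _ X Y]
  module

lemma TG_swap (t : ℝ) (X Y Z : Fin 6 → ℝ) : TG t X Y Z = -TG t Y X Z := by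
  simp only [TG, three]; ring

lemma TG_eq_sum (t : ℝ) (X Y Z : Fin 6 → ℝ) : TG t X Y Z = ∑ m, TG t X Y (e m) * Z m := by
  simp only [TG, three, e, Fin.sum_univ_six, Fin.reduceEq, reduceIte]
  ring

lemma nab_brG_TG (t : ℝ) (X Y : Fin 6 → ℝ) :
    nab (brG t) (TG t) X Y = (2 / t) • ![X 4 * Y 2 - X 2 * Y 4, X 4 * Y 3 - X 2 * Y 5,
      X 0 * Y 4 - X 4 * Y 0, X 0 * Y 5 - X 4 * Y 1, X 2 * Y 0 - X 0 * Y 2,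
      X 2 * Y 1 - X 0 * Y 3] := by
  funext m
  fin_cases m <;>
  · simp only [nab, brG, TG, gIP, two, three, e, Fin.sum_univ_six, Pi.add_apply, Pi.smul_apply,
      smul_eq_mul, Fin.isValue, Fin.zero_eta, Fin.mk_one, Fin.reduceFinMk, Fin.reduceEq,
      reduceIte, Matrix.cons_val, Matrix.cons_val_zero, Matrix.cons_val_one]
    ring

lemma nab_brG_TG_Jc (t : ℝ) (X Y : Fin 6 → ℝ) :
    nab (brG t) (TG t) X (Jc Y) = Jc (nab (brG t) (TG t) X Y) := by
  funext m
  fin_cases m <;>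
    simp only [Jc, nab_brG_TG, Pi.smul_apply, smul_eq_mul, Fin.isValue, Fin.zero_eta,
      Fin.mk_one, Fin.reduceFinMk, Matrix.cons_val, Matrix.cons_val_zero,
      Matrix.cons_val_one] <;>
    ring

lemma nabForm3_brG_TG_Thp (t : ℝ) (X Y Z V : Fin 6 → ℝ) :
    nabForm3 (brG t) (TG t) Thp X Y Z V = 0 := by
  simp only [nabForm3, Thp, three, nab_brG_TG, Pi.smul_apply, smul_eq_mul, Fin.isValue,
    Matrix.cons_val, Matrix.cons_val_zero, Matrix.cons_val_one]
  ring

lemma nabForm3_brG_TG_Thm (t : ℝ) (X Y Z V : Fin 6 → ℝ) :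
    nabForm3 (brG t) (TG t) Thm X Y Z V = 0 := by
  simp only [nabForm3, Thm, three, nab_brG_TG, Pi.smul_apply, smul_eq_mul, Fin.isValue,
    Matrix.cons_val, Matrix.cons_val_zero, Matrix.cons_val_one]
  ring

lemma gIP_torsion_brG_TG (t : ℝ) (X Y Z : Fin 6 → ℝ) :
    gIP (nab (brG t) (TG t) X Y - nab (brG t) (TG t) Y X - brG t X Y) Z = TG t X Y Z := by
  rw [gIP, TG_eq_sum]
  simp only [nab_torsion_apply _ _ (brG_swap t) (TG_swap t)]

lemma sum_TG_Jc_eq_zero (t : ℝ) (X : Fin 6 → ℝ) :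
    ∑ i, TG t (Jc X) (e i) (Jc (e i)) = 0 := by
  simp [TG, three, Jc, e, Fin.sum_univ_six]

theorem stmt12_general (t : ℝ) :
    (∀ X Y : Fin 6 → ℝ, nab (brG t) (TG t) X (Jc Y) = Jc (nab (brG t) (TG t) X Y)) ∧
    (∀ X Y Z V : Fin 6 → ℝ, nabForm3 (brG t) (TG t) Thp X Y Z V = 0) ∧
    (∀ X Y Z V : Fin 6 → ℝ, nabForm3 (brG t) (TG t) Thm X Y Z V = 0) ∧
    (∀ X Y Z : Fin 6 → ℝ,
      gIP (nab (brG t) (TG t) X Y - nab (brG t) (TG t) Y X - brG t X Y) Z = TG t X Y Z) ∧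
    (∀ X : Fin 6 → ℝ, -(1/2) * ∑ i, TG t (Jc X) (e i) (Jc (e i)) = 0) :=
  ⟨nab_brG_TG_Jc t, nabForm3_brG_TG_Thp t, nabForm3_brG_TG_Thm t, gIP_torsion_brG_TG t,
    fun X => by rw [sum_TG_Jc_eq_zero, mul_zero]⟩

/-- on g_t (t ≠ 0), the torsion connection ∇ of
T = −(1/t)(3e₁₃₅ + e₁₄₆ + e₂₃₆ + e₂₄₅) satisfies ∇J = 0, ∇Θ⁺ = ∇Θ⁻ = 0, has torsion T,
and the Lee form vanishes. -/
theorem stmt12 (t : ℝ) (ht : t ≠ 0) :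
    (∀ X Y : Fin 6 → ℝ, nab (brG t) (TG t) X (Jc Y) = Jc (nab (brG t) (TG t) X Y)) ∧
    (∀ X Y Z V : Fin 6 → ℝ, nabForm3 (brG t) (TG t) Thp X Y Z V = 0) ∧
    (∀ X Y Z V : Fin 6 → ℝ, nabForm3 (brG t) (TG t) Thm X Y Z V = 0) ∧
    (∀ X Y Z : Fin 6 → ℝ,
      gIP (nab (brG t) (TG t) X Y - nab (brG t) (TG t) Y X - brG t X Y) Z = TG t X Y Z) ∧
    (∀ X : Fin 6 → ℝ, -(1/2) * ∑ i, TG t (Jc X) (e i) (Jc (e i)) = 0) :=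
  stmt12_general t
end
end
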